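/- arXiv:1808.06990 — 5 statements merged into one kernel-verified Lean document; each statement's English description precedes it below -/
import Mathlib

section
/- For every δ > 0 there exists λ₀ > 0 such that for all λ ∈ (0, λ₀) one has -ln λ + ln(-ln λ) < \bar{u}_λ ≤ -(1+δ)·ln λ. -/
open Real

theorem ubar_precise_bounds
    (ub : ℝ → ℝ)
    (hub : ∀ lam : ℝ, 0 < lam → lam < exp (-1) →
      (lam * exp (ub lam) = ub lam ∧ 1 < ub lam) ∧
      ∀ u : ℝ, lam * exp u = u → u ≤ ub lam)
    (δ : ℝ) (hδ0 : 0 < δ) :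
    ∃ lam₀ > 0, ∀ lam : ℝ, 0 < lam → lam < lam₀ →
      -Real.log lam + Real.log (-Real.log lam) < ub lam ∧
      ub lam ≤ -(1 + δ) * Real.log lam := by
  set C : ℝ := max 2 ((2/δ) * (Real.log (1+δ) + Real.log (2/δ))) with hCdef
  refine ⟨exp (-C), exp_pos _, fun lam hl0 hlC => ?_⟩
  have hC2 : (2:ℝ) ≤ C := le_max_left _ _
  have hCδ : (2/δ) * (Real.log (1+δ) + Real.log (2/δ)) ≤ C := le_max_right _ _
  have hloglam : Real.log lam < -C := by
    calc Real.log lam < Real.log (exp (-C)) := Real.log_lt_log hl0 hlC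
    _ = -C := Real.log_exp _
  set L : ℝ := -Real.log lam with hLdef
  have hCL : C < L := by simp only [hLdef]; linarith
  have hL2 : 2 < L := lt_of_le_of_lt hC2 hCL
  have hL0 : 0 < L := by linarith
  have hlamlt : lam < exp (-1) := by
    have h1 : Real.log lam < -1 := by linarith
    calc lam = exp (Real.log lam) := (Real.exp_log hl0).symm
    _ < exp (-1) := Real.exp_lt_exp.mpr h1
  obtain ⟨⟨hfix, hub1⟩, hmax⟩ := hub lam hl0 hlamlt
  have hexpL : lam * exp L = 1 := by
    rw [hLdef, Real.exp_neg, Real.exp_log hl0]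
    field_simp
  have hlogL : 0 < Real.log L := Real.log_pos (by linarith)
  constructor
  · -- lower bound
    set u₀ : ℝ := L + Real.log L with hu0
    have hval : lam * exp u₀ = L := by
      rw [hu0, Real.exp_add, ← mul_assoc, hexpL, one_mul, Real.exp_log hL0]
    set M : ℝ := max (u₀ + 1) (4 / lam) with hMdef
    have hM4 : 4 / lam ≤ M := le_max_right _ _
    have hMu : u₀ + 1 ≤ M := le_max_left _ _
    have hM0 : 0 < M := lt_of_lt_of_le (by positivity) hM4
    have hexpM : (1 + M/2)^2 ≤ exp M := by
      have h2 : exp (M/2) * exp (M/2) = exp M := by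
        rw [← Real.exp_add]; ring_nf
      nlinarith [Real.exp_pos (M/2), Real.add_one_le_exp (M/2)]
    have hfM : 0 < lam * exp M - M := by
      have hlM : 4 ≤ lam * M := by
        rw [← div_le_iff₀' hl0]; exact hM4
      nlinarith [mul_le_mul_of_nonneg_left hexpM hl0.le, hM0, hl0]
    have hcont : ContinuousOn (fun u => lam * exp u - u) (Set.Icc u₀ M) :=
      (Continuous.sub (continuous_const.mul Real.continuous_exp) continuous_id).continuousOn
    have h0mem : (0:ℝ) ∈ Set.Ioc ((fun u => lam * exp u - u) u₀) ((fun u => lam * exp u - u) M) := by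
      constructor
      · simp only [hval]; linarith
      · simpa using hfM.le
    obtain ⟨u, humem, hueq⟩ := intermediate_value_Ioc (by linarith : u₀ ≤ M) hcont h0mem
    have hroot : lam * exp u = u := by
      have : lam * exp u - u = 0 := hueq
      linarith
    have := hmax u hroot
    have hu₀u : u₀ < u := humem.1
    simp only [hLdef] at hu0 ⊢
    linarith
  · -- upper bound
    by_contra hcon
    push_neg at hcon
    set b : ℝ := ub lam with hb
    set a : ℝ := (1+δ) * L with ha
    have hab : a < b := by
      simp only [ha, hLdef] at *
      linarith [hcon]
    have ha1 : 1 ≤ a := by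
      have : 1 * 1 ≤ (1+δ) * L := by
        apply mul_le_mul <;> linarith
      linarith
    have hb0 : 0 < b := by linarith
    have ha0 : 0 < a := by linarith
    -- from fixed point: b - log b = L
    have hkey : b - Real.log b = L := by
      have h1 : Real.log (lam * exp b) = Real.log b := by rw [hfix]
      rw [Real.log_mul (ne_of_gt hl0) (ne_of_gt (exp_pos b)), Real.log_exp] at h1
      simp only [hLdef]
      linarith
    -- strict monotonicity of x - log x on [1, ∞)
    have hmono : a - Real.log a < b - Real.log b := by
      have hba : Real.log b - Real.log a < b - a := by
        have hdiv : Real.log (b/a) < b/a - 1 := by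
          apply Real.log_lt_sub_one_of_pos (by positivity)
          intro h
          have : b = a := by field_simp at h; linarith
          linarith
        rw [Real.log_div (ne_of_gt hb0) (ne_of_gt ha0)] at hdiv
        have : b/a - 1 = (b - a)/a := by field_simp
        rw [this] at hdiv
        have h2 : (b - a)/a ≤ b - a := by
          rw [div_le_iff₀ ha0]
          nlinarith
        linarith
      linarith
    -- so log a > δ L
    have hla : δ * L < Real.log a := by
      rw [hkey] at hmono
      simp only [ha] at hmono ⊢
      nlinarith [hmono]
    -- but log a = log(1+δ) + log L and log L is small
    have hlogaeq : Real.log a = Real.log (1+δ) + Real.log L := by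
      rw [ha, Real.log_mul (by linarith) (ne_of_gt hL0)]
    have hlogLsmall : Real.log L ≤ (δ/2) * L - 1 + Real.log (2/δ) := by
      have h1 : Real.log ((δ/2) * L) ≤ (δ/2) * L - 1 :=
        Real.log_le_sub_one_of_pos (by positivity)
      rw [Real.log_mul (by positivity) (ne_of_gt hL0)] at h1
      have h2 : Real.log (δ/2) = -Real.log (2/δ) := by
        rw [← Real.log_inv]
        congr 1
        field_simp
      linarith
    have hCbound : Real.log (1+δ) + Real.log (2/δ) < (δ/2) * L := by
      have h1 : (2/δ) * (Real.log (1+δ) + Real.log (2/δ)) < L := lt_of_le_of_lt hCδ hCL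
      have h2 : (δ/2) * ((2/δ) * (Real.log (1+δ) + Real.log (2/δ))) < (δ/2) * L :=
        (mul_lt_mul_iff_right₀ (by positivity)).mpr h1
      have h3 : (δ/2) * ((2/δ) * (Real.log (1+δ) + Real.log (2/δ))) = Real.log (1+δ) + Real.log (2/δ) := by
        field_simp
      linarith
    rw [hlogaeq] at hla
    clear_value L
    linarith [hla, hlogLsmall, hCbound]
end

section
/- Fix an integer N with 3 ≤ N ≤ 5 and a real c with 0 < c < (4/(N-2))·e^{-(6-N)/(N-2)}. Then f(x) = x² - c·(N·(e^x - 1 - x) - ((N-2)/2)·x·(e^x - 1)) satisfies f''(x) > 0 for all x ≥ 0, and consequently f(x) > 0 for all x > 0. -/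
/-!
With `a = (N - 2) / 2` one has `f''(x) = 2 - c (2 - a x) eˣ`, and `(2 - a x) eˣ` attains its maximum
`a e^{2/a - 1}` at `x = 2/a - 1`. The bound on `c` says precisely `c a e^{2/a - 1} < 2`, so `f'' > 0`
on all of `ℝ`; since `f(0) = f'(0) = 0`, integrating twice gives `f > 0` on `(0, ∞)`.
-/

open Real Set

theorem sub_mul_exp_le_exp_sub_one (b x : ℝ) : (b - x) * exp x ≤ exp (b - 1) := by
  have h := add_one_le_exp (b - 1 - x)
  calc (b - x) * exp x ≤ exp (b - 1 - x) * exp x := by gcongr; linarith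
    _ = exp (b - 1) := by rw [← exp_add]; ring_nf

theorem pos_of_hasDerivAt_of_deriv_pos {f f' : ℝ → ℝ}
    (hf : ∀ x, 0 ≤ x → HasDerivAt f (f' x) x) (h0 : f 0 = 0) (hpos : ∀ x, 0 < x → 0 < f' x)
    {x : ℝ} (hx : 0 < x) : 0 < f x := by
  have hmono : StrictMonoOn f (Ici 0) := by
    refine strictMonoOn_of_deriv_pos (convex_Ici 0)
      (fun y hy => (hf y hy).continuousAt.continuousWithinAt) fun y hy => ?_
    rw [interior_Ici] at hy
    rw [(hf y (le_of_lt hy)).deriv]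
    exact hpos y hy
  simpa [h0] using hmono self_mem_Ici hx.le hx

section Pohozaev

variable (c n : ℝ)

noncomputable def pohozaevFun (x : ℝ) : ℝ :=
  x ^ 2 - c * (n * (exp x - 1 - x) - ((n - 2) / 2) * x * (exp x - 1))

noncomputable def pohozaevFunDeriv (x : ℝ) : ℝ :=
  2 * x - c * (n * (exp x - 1) - ((n - 2) / 2) * (exp x - 1 + x * exp x))

noncomputable def pohozaevFunDeriv2 (x : ℝ) : ℝ :=
  2 - c * (2 * exp x - ((n - 2) / 2) * x * exp x)

theorem hasDerivAt_pohozaevFun (x : ℝ) :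
    HasDerivAt (pohozaevFun c n) (pohozaevFunDeriv c n x) x := by
  have hexp := (hasDerivAt_exp x).sub_const 1
  refine ((hasDerivAt_pow 2 x).sub ((((hexp.sub (hasDerivAt_id' x)).const_mul n).sub
    (((hasDerivAt_id' x).const_mul ((n - 2) / 2)).mul hexp)).const_mul c)).congr_deriv ?_
  simp only [pohozaevFunDeriv]; ring

theorem hasDerivAt_pohozaevFunDeriv (x : ℝ) :
    HasDerivAt (pohozaevFunDeriv c n) (pohozaevFunDeriv2 c n x) x := by
  have hexp := (hasDerivAt_exp x).sub_const 1
  refine (((hasDerivAt_id' x).const_mul 2).sub (((hexp.const_mul n).sub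
    ((hexp.add ((hasDerivAt_id' x).mul (hasDerivAt_exp x))).const_mul ((n - 2) / 2))).const_mul
      c)).congr_deriv ?_
  simp only [pohozaevFunDeriv2]; ring

variable {c n}

theorem pohozaevFunDeriv2_pos (hn : 2 < n) (hc0 : 0 < c)
    (hc : c < 4 / (n - 2) * exp (-(6 - n) / (n - 2))) (x : ℝ) : 0 < pohozaevFunDeriv2 c n x := by
  set b := 4 / (n - 2)
  have hn2 : n - 2 ≠ 0 := by linarith
  have hab : (n - 2) / 2 * b = 2 := by simp only [b]; field_simp; ring
  have hexponent : -(6 - n) / (n - 2) = -(b - 1) := by simp only [b]; field_simp; ring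
  rw [hexponent] at hc
  have hmax : 2 * exp x - (n - 2) / 2 * x * exp x ≤ (n - 2) / 2 * exp (b - 1) := by
    calc 2 * exp x - (n - 2) / 2 * x * exp x = (n - 2) / 2 * ((b - x) * exp x) := by
          linear_combination (-exp x) * hab
      _ ≤ (n - 2) / 2 * exp (b - 1) := by gcongr; exact sub_mul_exp_le_exp_sub_one b x
  have hcmax : c * ((n - 2) / 2 * exp (b - 1)) < 2 := by
    calc c * ((n - 2) / 2 * exp (b - 1)) < b * exp (-(b - 1)) * ((n - 2) / 2 * exp (b - 1)) := by
          gcongr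
      _ = 2 := by
          have hexp : exp (-(b - 1)) * exp (b - 1) = 1 := by rw [← exp_add]; simp
          linear_combination (n - 2) / 2 * b * hexp + hab
  unfold pohozaevFunDeriv2
  linarith [mul_le_mul_of_nonneg_left hmax hc0.le]

end Pohozaev

theorem pohozaev_f_pos_low_dim_general (N : ℕ) (hN3 : 3 ≤ N)
    (c : ℝ) (hc0 : 0 < c)
    (hc1 : c < (4 / ((N : ℝ) - 2)) * exp (-(6 - (N : ℝ)) / ((N : ℝ) - 2)))
    (f : ℝ → ℝ)
    (hf : ∀ x : ℝ, f x =
      x ^ 2 - c * ((N : ℝ) * (exp x - 1 - x) - (((N : ℝ) - 2) / 2) * x * (exp x - 1))) :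
    (∀ x : ℝ, 0 ≤ x →
      0 < 2 - c * (2 * exp x - (((N : ℝ) - 2) / 2) * x * exp x)) ∧
    ∀ x : ℝ, 0 < x → 0 < f x := by
  have hN : (2 : ℝ) < N := by exact_mod_cast hN3
  obtain rfl : f = pohozaevFun c N := funext hf
  have hf'' := pohozaevFunDeriv2_pos hN hc0 hc1
  refine ⟨fun x _ => hf'' x, fun x hx => ?_⟩
  refine pos_of_hasDerivAt_of_deriv_pos (fun y _ => hasDerivAt_pohozaevFun c N y)
    (by simp [pohozaevFun]) (fun y hy => ?_) hx
  exact pos_of_hasDerivAt_of_deriv_pos (fun z _ => hasDerivAt_pohozaevFunDeriv c N z)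
    (by simp [pohozaevFunDeriv]) (fun z _ => hf'' z) hy

theorem pohozaev_f_pos_low_dim (N : ℕ) (hN3 : 3 ≤ N) (hN5 : N ≤ 5)
    (c : ℝ) (hc0 : 0 < c)
    (hc1 : c < (4 / ((N : ℝ) - 2)) * exp (-(6 - (N : ℝ)) / ((N : ℝ) - 2)))
    (f : ℝ → ℝ)
    (hf : ∀ x : ℝ, f x =
      x ^ 2 - c * ((N : ℝ) * (exp x - 1 - x) - (((N : ℝ) - 2) / 2) * x * (exp x - 1))) :
    (∀ x : ℝ, 0 ≤ x →
      0 < 2 - c * (2 * exp x - (((N : ℝ) - 2) / 2) * x * exp x)) ∧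
    ∀ x : ℝ, 0 < x → 0 < f x :=
  pohozaev_f_pos_low_dim_general N hN3 c hc0 hc1 f hf
end

section
/- Define P_N = ((e^{1.1} - 1.1 - 1)/((N-2)·1.1)) · T_N, where T_N = (1 + e^{-(α+8)π/(2β)})·4/((α+8)² + 4β²) for 3 ≤ N ≤ 9, T_N = 4/(α+8)² for N = 10, and T_N = 4/((α+8)² - 4β²) for N > 10, with α = N-2, β = √((N-2)|N-10|)/2. Then P_N < 1/3 for every integer N ≥ 3. -/
open Real

lemma exp_one_one_lt : Real.exp 1.1 < 3.03 := by
  have h1 : Real.exp 1 < 2.7182818286 := Real.exp_one_lt_d9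
  have h3 : (0.9:ℝ) < Real.exp (-0.1) := by
    have := Real.add_one_lt_exp (x := (-0.1:ℝ)) (by norm_num)
    linarith
  have h2 : Real.exp 0.1 < 1 / 0.9 := by
    have h4 : Real.exp 0.1 = 1 / Real.exp (-0.1) := by
      rw [Real.exp_neg]; field_simp
    rw [h4, div_lt_div_iff₀ (Real.exp_pos _) (by norm_num)]
    linarith
  have h5 : Real.exp 1.1 = Real.exp 1 * Real.exp 0.1 := by
    rw [← Real.exp_add]; norm_num
  have h0 : (0:ℝ) < Real.exp 0.1 := Real.exp_pos _
  nlinarith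

theorem P_N_lt_third (N : ℕ) (hN : 3 ≤ N)
    (α β T P : ℝ) (hα : α = (N : ℝ) - 2)
    (hβ : β = Real.sqrt (((N : ℝ) - 2) * |(N : ℝ) - 10|) / 2)
    (hT : T = if N ≤ 9 then (1 + exp (-(α + 8) * π / (2 * β))) * 4 / ((α + 8) ^ 2 + 4 * β ^ 2)
      else if N = 10 then 4 / (α + 8) ^ 2
      else 4 / ((α + 8) ^ 2 - 4 * β ^ 2))
    (hP : P = ((exp 1.1 - 1.1 - 1) / (((N : ℝ) - 2) * 1.1)) * T) :
    P < 1 / 3 := by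
  have hN3 : (3:ℝ) ≤ (N:ℝ) := by exact_mod_cast hN
  have hx : (0:ℝ) ≤ ((N:ℝ) - 2) * |(N:ℝ) - 10| :=
    mul_nonneg (by linarith) (abs_nonneg _)
  have hβ2 : β ^ 2 = ((N:ℝ) - 2) * |(N:ℝ) - 10| / 4 := by
    rw [hβ, div_pow, Real.sq_sqrt hx]; norm_num
  have hβ2nn : 0 ≤ β ^ 2 := by rw [hβ2]; linarith
  have hα9 : (9:ℝ) ≤ α + 8 := by rw [hα]; linarith
  -- bound T
  have hTb : 0 ≤ T ∧ T ≤ 8 / 81 := by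
    by_cases h9 : N ≤ 9
    · have hN9 : (N:ℝ) ≤ 9 := by exact_mod_cast h9
      have hβpos : 0 < β := by
        rw [hβ]
        apply div_pos _ (by norm_num)
        apply Real.sqrt_pos.mpr
        apply mul_pos (by linarith)
        rw [abs_pos]
        intro h; linarith
      have hargneg : -(α + 8) * π / (2 * β) < 0 := by
        apply div_neg_of_neg_of_pos
        · nlinarith [Real.pi_pos]
        · linarith
      have hexp1 : Real.exp (-(α + 8) * π / (2 * β)) < 1 :=
        Real.exp_lt_one_iff.mpr hargneg
      have hexp0 : 0 < Real.exp (-(α + 8) * π / (2 * β)) := Real.exp_pos _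
      have hD : (81:ℝ) ≤ (α + 8) ^ 2 + 4 * β ^ 2 := by nlinarith
      rw [hT, if_pos h9]
      constructor
      · apply div_nonneg (by nlinarith) (by nlinarith)
      · apply div_le_div₀ (by norm_num) (by nlinarith) (by norm_num) hD
    · by_cases h10 : N = 10
      · subst h10
        rw [hT, if_neg h9, if_pos rfl, hα]
        norm_num
      · have hN11 : (11:ℝ) ≤ (N:ℝ) := by
          have : 11 ≤ N := by omega
          exact_mod_cast this
        have habs : |(N:ℝ) - 10| = (N:ℝ) - 10 := abs_of_nonneg (by linarith)
        have hD : (α + 8) ^ 2 - 4 * β ^ 2 = 24 * (N:ℝ) + 16 := by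
          rw [hα, hβ2, habs]; ring
        rw [hT, if_neg h9, if_neg h10, hD]
        constructor
        · apply div_nonneg (by norm_num) (by linarith)
        · apply div_le_div₀ (by norm_num) (by norm_num) (by norm_num) (by linarith)
  -- bound the factor
  have hClt : Real.exp 1.1 < 3.03 := exp_one_one_lt
  have hCgt : (2.1:ℝ) < Real.exp 1.1 := by
    have := Real.add_one_lt_exp (x := (1.1:ℝ)) (by norm_num)
    linarith
  have hden : (1.1:ℝ) ≤ ((N:ℝ) - 2) * 1.1 := by nlinarith
  have hF0 : 0 ≤ (Real.exp 1.1 - 1.1 - 1) / (((N:ℝ) - 2) * 1.1) :=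
    div_nonneg (by linarith) (by linarith)
  have hF : (Real.exp 1.1 - 1.1 - 1) / (((N:ℝ) - 2) * 1.1) ≤ 0.85 := by
    have h1 : (Real.exp 1.1 - 1.1 - 1) / (((N:ℝ) - 2) * 1.1) ≤ 0.93 / 1.1 :=
      div_le_div₀ (by norm_num) (by linarith) (by norm_num) hden
    linarith [h1]
  rw [hP]
  calc ((Real.exp 1.1 - 1.1 - 1) / (((N:ℝ) - 2) * 1.1)) * T
      ≤ 0.85 * (8 / 81) := mul_le_mul hF hTb.2 hTb.1 (by norm_num)
    _ < 1 / 3 := by norm_num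
end

section
/- Let Γ = 1.1, P ∈ (0, 1/3], α = N-2 and β = √((N-2)(10-N))/2 for 3 ≤ N ≤ 9, and ψ(z) = φ((1-P)z) - e^{-απ/(2β)}·φ((1+P)e^{-2π/β}·z) with φ(x) = -2(N-2)(e^x - 1 - x). Then ψ''(z) < 0 for all z ∈ [0, Γ], and since ψ(0) = ψ'(0) = 0, ψ(z) < 0 for all z ∈ (0, Γ]. -/
/-!
With `expRem x = exp x - 1 - x` we have `φ = -κ expRem` for `κ = 2(N - 2) > 0` and
`ψ z = -κ (expRem (a z) - c expRem (d z))` with `a = 1 - P`, `c = exp (-απ/(2β)) ≤ 1` and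
`d = (1 + P) exp (-2π/β)`. Since `0 < β ≤ 2`, `|d| ≤ 2 (1 - P) exp (-π) < a`, hence
`c d² exp (d z) < a² exp (a z)` for `z ≥ 0`, i.e. `ψ'' < 0` on `[0, ∞)`.
As `ψ 0 = ψ' 0 = 0`, integrating twice gives `ψ < 0` on `(0, ∞)`.
-/

open Real Set

theorem neg_of_deriv_neg_of_eq_zero {f : ℝ → ℝ} {x₀ b : ℝ} (hf : ContinuousOn f (Icc x₀ b))
    (h₀ : f x₀ = 0) (hf' : ∀ x ∈ Ioo x₀ b, deriv f x < 0) : ∀ x ∈ Ioc x₀ b, f x < 0 := by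
  intro x hx
  have hanti : StrictAntiOn f (Icc x₀ b) :=
    strictAntiOn_of_deriv_neg (convex_Icc x₀ b) hf (by rwa [interior_Icc])
  simpa [h₀] using hanti (left_mem_Icc.2 (hx.1.le.trans hx.2)) (Ioc_subset_Icc_self hx) hx.1

theorem neg_of_deriv_deriv_neg_of_eq_zero {f : ℝ → ℝ} {x₀ b : ℝ}
    (hf : ContinuousOn f (Icc x₀ b)) (hf' : ContinuousOn (deriv f) (Icc x₀ b))
    (h₀ : f x₀ = 0) (h₀' : deriv f x₀ = 0) (hf'' : ∀ x ∈ Ioo x₀ b, deriv (deriv f) x < 0) :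
    ∀ x ∈ Ioc x₀ b, f x < 0 :=
  neg_of_deriv_neg_of_eq_zero hf h₀ fun x hx =>
    neg_of_deriv_neg_of_eq_zero hf' h₀' hf'' x (Ioo_subset_Ioc_self hx)

noncomputable def expRem (x : ℝ) : ℝ := exp x - 1 - x

theorem hasDerivAt_expRem_comp_mul (k z : ℝ) :
    HasDerivAt (fun z => expRem (k * z)) (k * (exp (k * z) - 1)) z := by
  have hlin : HasDerivAt (fun z => k * z) k z := by simpa using (hasDerivAt_id z).const_mul k
  exact ((hlin.exp.sub_const 1).sub hlin).congr_deriv (by ring)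

theorem hasDerivAt_mul_exp_mul_sub_one (k z : ℝ) :
    HasDerivAt (fun z => k * (exp (k * z) - 1)) (k ^ 2 * exp (k * z)) z := by
  have hlin : HasDerivAt (fun z => k * z) k z := by simpa using (hasDerivAt_id z).const_mul k
  exact ((hlin.exp.sub_const 1).const_mul k).congr_deriv (by ring)

theorem sq_mul_exp_mul_lt {a c d z : ℝ} (hc : c ≤ 1) (hd : |d| < a)
    (hz : 0 ≤ z) : c * (d ^ 2 * exp (d * z)) < a ^ 2 * exp (a * z) := by
  have hsq : d ^ 2 < a ^ 2 := by
    rw [← sq_abs d]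
    exact pow_lt_pow_left₀ hd (abs_nonneg d) two_ne_zero
  have hexp : exp (d * z) ≤ exp (a * z) :=
    exp_le_exp.2 (mul_le_mul_of_nonneg_right ((le_abs_self d).trans hd.le) hz)
  calc c * (d ^ 2 * exp (d * z)) ≤ d ^ 2 * exp (d * z) :=
        mul_le_of_le_one_left (by positivity) hc
    _ ≤ d ^ 2 * exp (a * z) := by gcongr
    _ < a ^ 2 * exp (a * z) := by gcongr

section Combination

variable {κ a c d : ℝ}

theorem hasDerivAt_expRem_comb (z : ℝ) :
    HasDerivAt (fun z => -κ * (expRem (a * z) - c * expRem (d * z)))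
      (-κ * (a * (exp (a * z) - 1) - c * (d * (exp (d * z) - 1)))) z :=
  ((hasDerivAt_expRem_comp_mul a z).sub
    ((hasDerivAt_expRem_comp_mul d z).const_mul c)).const_mul (-κ)

theorem hasDerivAt_deriv_expRem_comb (z : ℝ) :
    HasDerivAt (deriv fun z => -κ * (expRem (a * z) - c * expRem (d * z)))
      (-κ * (a ^ 2 * exp (a * z) - c * (d ^ 2 * exp (d * z)))) z := by
  rw [funext fun z => (hasDerivAt_expRem_comb (κ := κ) (a := a) (c := c) (d := d) z).deriv]
  exact ((hasDerivAt_mul_exp_mul_sub_one a z).sub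
    ((hasDerivAt_mul_exp_mul_sub_one d z).const_mul c)).const_mul (-κ)

theorem deriv_deriv_expRem_comb_neg (hκ : 0 < κ) (hc : c ≤ 1) (hd : |d| < a)
    {z : ℝ} (hz : 0 ≤ z) :
    deriv (deriv fun z => -κ * (expRem (a * z) - c * expRem (d * z))) z < 0 := by
  rw [(hasDerivAt_deriv_expRem_comb z).deriv, neg_mul, neg_neg_iff_pos]
  exact mul_pos hκ (sub_pos.2 (sq_mul_exp_mul_lt hc hd hz))

theorem expRem_comb_neg (hκ : 0 < κ) (hc : c ≤ 1) (hd : |d| < a)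
    {z : ℝ} (hz : 0 < z) : -κ * (expRem (a * z) - c * expRem (d * z)) < 0 := by
  refine neg_of_deriv_deriv_neg_of_eq_zero
    (f := fun z => -κ * (expRem (a * z) - c * expRem (d * z))) (x₀ := 0) (b := z)
    ?_ ?_ ?_ ?_ ?_ z ⟨hz, le_rfl⟩
  · exact fun x _ => (hasDerivAt_expRem_comb x).continuousAt.continuousWithinAt
  · exact fun x _ => (hasDerivAt_deriv_expRem_comb x).continuousAt.continuousWithinAt
  · simp [expRem]
  · rw [(hasDerivAt_expRem_comb 0).deriv]
    simp
  · exact fun x hx => deriv_deriv_expRem_comb_neg hκ hc hd hx.1.le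

end Combination

theorem exp_neg_pi_lt_half : exp (-π) < 1 / 2 := by
  rw [exp_neg, inv_lt_comm₀ (exp_pos π) one_half_pos, one_div, inv_inv]
  linarith [add_one_lt_exp pi_pos.ne', pi_gt_three]

theorem abs_one_add_mul_exp_neg_two_pi_div_lt {P β : ℝ} (hP : P ≤ 1 / 3) (hβ₀ : 0 < β)
    (hβ₂ : β ≤ 2) :
    |(1 + P) * exp (-2 * π / β)| < 1 - P := by
  have hexp : exp (-2 * π / β) ≤ exp (-π) := by
    refine exp_le_exp.2 ((div_le_iff₀ hβ₀).2 ?_)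
    nlinarith [pi_pos]
  have hP' : |1 + P| ≤ 2 * (1 - P) := abs_le.2 ⟨by linarith, by linarith⟩
  rw [abs_mul, abs_of_pos (exp_pos _)]
  calc |1 + P| * exp (-2 * π / β) ≤ 2 * (1 - P) * exp (-π) :=
        mul_le_mul hP' hexp (exp_pos _).le (by linarith)
    _ < 2 * (1 - P) * (1 / 2) := mul_lt_mul_of_pos_left exp_neg_pi_lt_half (by linarith)
    _ = 1 - P := by ring

theorem sqrt_sub_two_mul_ten_sub_div_two_mem_Ioc {n : ℝ} (h₂ : 2 < n) (h₁₀ : n < 10) :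
    √((n - 2) * (10 - n)) / 2 ∈ Ioc 0 2 := by
  constructor
  · exact div_pos (sqrt_pos.2 (mul_pos (by linarith) (by linarith))) two_pos
  · have : √((n - 2) * (10 - n)) ≤ 4 :=
      sqrt_le_iff.2 ⟨by norm_num, by nlinarith [sq_nonneg (n - 6)]⟩
    linarith

theorem psi_neg_general (N : ℕ) (hN3 : 3 ≤ N) (hN9 : N ≤ 9)
    (α β : ℝ) (hα : α = (N : ℝ) - 2)
    (hβ : β = Real.sqrt (((N : ℝ) - 2) * (10 - (N : ℝ))) / 2)
    (P : ℝ) (hP3 : P ≤ 1 / 3)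
    (φ ψ : ℝ → ℝ)
    (hφ : ∀ x : ℝ, φ x = -2 * ((N : ℝ) - 2) * (exp x - 1 - x))
    (hψ : ∀ z : ℝ, ψ z = φ ((1 - P) * z) - exp (-α * π / (2 * β)) * φ ((1 + P) * exp (-2 * π / β) * z)) :
    (∀ z ∈ Set.Icc (0 : ℝ) 1.1, deriv (deriv ψ) z < 0) ∧
    (∀ z ∈ Set.Ioc (0 : ℝ) 1.1, ψ z < 0) := by
  have hN3' : (3 : ℝ) ≤ N := by exact_mod_cast hN3
  have hN9' : (N : ℝ) ≤ 9 := by exact_mod_cast hN9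
  have hκ : 0 < 2 * ((N : ℝ) - 2) := by linarith
  obtain ⟨hβ₀, hβ₂⟩ :=
    hβ ▸ sqrt_sub_two_mul_ten_sub_div_two_mem_Ioc (n := N) (by linarith) (by linarith)
  have hc : exp (-α * π / (2 * β)) ≤ 1 :=
    exp_le_one_iff.2 (div_nonpos_of_nonpos_of_nonneg
      (by nlinarith [pi_pos]) (by linarith))
  have hd := abs_one_add_mul_exp_neg_two_pi_div_lt hP3 hβ₀ hβ₂
  have hψ_eq : ψ = fun z => -(2 * ((N : ℝ) - 2)) * (expRem ((1 - P) * z) -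
      exp (-α * π / (2 * β)) * expRem ((1 + P) * exp (-2 * π / β) * z)) := by
    funext z
    rw [hψ, hφ, hφ, expRem, expRem]
    ring
  rw [hψ_eq]
  exact ⟨fun z hz => deriv_deriv_expRem_comb_neg hκ hc hd hz.1,
    fun z hz => expRem_comb_neg hκ hc hd hz.1⟩

theorem psi_neg (N : ℕ) (hN3 : 3 ≤ N) (hN9 : N ≤ 9)
    (α β : ℝ) (hα : α = (N : ℝ) - 2)
    (hβ : β = Real.sqrt (((N : ℝ) - 2) * (10 - (N : ℝ))) / 2)
    (P : ℝ) (hP0 : 0 < P) (hP3 : P ≤ 1 / 3)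
    (φ ψ : ℝ → ℝ)
    (hφ : ∀ x : ℝ, φ x = -2 * ((N : ℝ) - 2) * (exp x - 1 - x))
    (hψ : ∀ z : ℝ, ψ z = φ ((1 - P) * z) - exp (-α * π / (2 * β)) * φ ((1 + P) * exp (-2 * π / β) * z)) :
    (∀ z ∈ Set.Icc (0 : ℝ) 1.1, deriv (deriv ψ) z < 0) ∧
    (∀ z ∈ Set.Ioc (0 : ℝ) 1.1, ψ z < 0) :=
  psi_neg_general N hN3 hN9 α β hα hβ P hP3 φ ψ hφ hψ
end

section
/- For 3 ≤ N ≤ 9 and any ε₀ > 0 with (N-2)²/4 + ε₀² ≤ 2(N-2), the functions f_j(r) = r^{-(N-2)/2}·sin(ε₀·(ln r)/2)·𝟙_{[r_{j+1}, r_j]}(r), with r_j = e^{-2πj/ε₀}, satisfy ∫_0^1 (|f_j'|² - ((N-2)²/4 + ε₀²)·r^{-2}·f_j²)·r^{N-1} dr = -(3/4)·ε₀²·∫_{r_{j+1}}^{r_j} r^{-2}·f_j²·r^{N-1} dr < 0, and f_j, f_k have disjoint supports for j ≠ k. -/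
/-!
On its support `[A, B] = [r_{j+1}, r_j]` the bump is `r^(-a) sin(b log r)` with `a = (N-2)/2` and
`b = ε₀/2`. The exponent `-a` is exactly the one for which the weight `r^(N-1)` cancels:
`(f')² r^(N-1) = (-a sin θ + b cos θ)² / r` and `f² r^(N-3) = sin² θ / r`, where `θ = b log r`.
Both are trigonometric polynomials in `θ` times `dr / r = dθ / b`, so they have explicit
antiderivatives. Since `sin θ` vanishes at `A` and `B`, the energy integral equals
`-(3/2) b² (log B - log A)` and the mass integral `(log B - log A) / 2`, which gives the identity
and its sign. Off `[A, B]` both `f_j` and `f_j'` vanish, and the two kinks are null sets, so the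
energy over `(0, 1)` is the energy over `[A, B]`. As `f_j` also vanishes at the nodes, it is
nonzero only on the open interval `(r_{j+1}, r_j)`, and these intervals are pairwise disjoint.
-/

open Real Set MeasureTheory

theorem intervalIntegral_eq_of_eqOn_Ioo_of_eqOn_compl_Icc {G E : ℝ → ℝ} {c d A B : ℝ}
    (hcA : c ≤ A) (hAB : A ≤ B) (hBd : B ≤ d) (hin : EqOn G E (Ioo A B))
    (hout : EqOn G 0 (Icc A B)ᶜ) :
    ∫ x in c..d, G x = ∫ x in A..B, E x := by
  have hae : G =ᵐ[volume] (Ioc A B).indicator E := by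
    filter_upwards [Measure.ae_ne volume A, Measure.ae_ne volume B] with x hxA hxB
    by_cases hx : x ∈ Ioo A B
    · rw [indicator_of_mem (Ioo_subset_Ioc_self hx), hin hx]
    · have hx' : x ∉ Icc A B := fun h => hx ⟨h.1.lt_of_ne' hxA, h.2.lt_of_ne hxB⟩
      rw [indicator_of_notMem (fun h => hx' (Ioc_subset_Icc_self h)), hout hx', Pi.zero_apply]
  rw [intervalIntegral.integral_of_le (hcA.trans (hAB.trans hBd)),
    intervalIntegral.integral_of_le hAB, integral_congr_ae (ae_restrict_of_ae hae),
    setIntegral_indicator measurableSet_Ioc, inter_eq_right.2 (Ioc_subset_Ioc hcA hBd)]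

theorem deriv_eq_zero_of_eqOn_compl {g : ℝ → ℝ} {s : Set ℝ} (hs : IsClosed s) (hg : EqOn g 0 sᶜ)
    {x : ℝ} (hx : x ∉ s) : deriv g x = 0 := by
  rw [(Filter.eventuallyEq_of_mem (hs.isOpen_compl.mem_nhds hx) hg).deriv_eq]
  exact deriv_const x 0

theorem hasDerivAt_rpow_neg_mul_sin_mul_log (a b : ℝ) {r : ℝ} (hr : 0 < r) :
    HasDerivAt (fun x => x ^ (-a) * sin (b * log x))
      (r ^ (-a) * (-a * sin (b * log r) + b * cos (b * log r)) / r) r := by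
  have hpow := hasDerivAt_rpow_const (p := -a) (Or.inl hr.ne')
  have hsin := ((hasDerivAt_log hr.ne').const_mul b).sin
  refine (hpow.mul hsin).congr_deriv ?_
  rw [rpow_sub_one hr.ne']
  field_simp

theorem sin_two_mul_eq_zero_of_sin_eq_zero {x : ℝ} (hx : sin x = 0) : sin (2 * x) = 0 := by
  rw [sin_two_mul, hx, mul_zero, zero_mul]

theorem rpow_neg_sq_mul_pow_sub_one {N : ℕ} (hN : 1 ≤ N) {r : ℝ} (hr : 0 < r) :
    (r ^ (-(((N : ℝ) - 2) / 2))) ^ 2 * r ^ (N - 1) = r := by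
  rw [← rpow_natCast, ← rpow_mul hr.le, ← rpow_natCast r, ← rpow_add hr, Nat.cast_sub hN]
  norm_num

section SinLogIntegrals

variable {b A B : ℝ}

theorem uIcc_subset_Ioi_zero (hA : 0 < A) (hAB : A ≤ B) : uIcc A B ⊆ Ioi 0 := by
  rw [uIcc_of_le hAB]
  exact fun x hx => hA.trans_le hx.1

theorem integral_sin_mul_log_sq_div (hb : b ≠ 0) (hA : 0 < A) (hAB : A ≤ B)
    (hsA : sin (b * log A) = 0) (hsB : sin (b * log B) = 0) :
    ∫ r in A..B, sin (b * log r) ^ 2 / r = (log B - log A) / 2 := by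
  have hderiv : ∀ r ∈ uIcc A B, HasDerivAt (fun x => log x / 2 - sin (2 * (b * log x)) / (4 * b))
      (sin (b * log r) ^ 2 / r) r := by
    intro r hr
    have hr0 : r ≠ 0 := (uIcc_subset_Ioi_zero hA hAB hr).ne'
    have hlog := hasDerivAt_log hr0
    refine ((hlog.div_const 2).sub
      (((hlog.const_mul b).const_mul 2).sin.div_const (4 * b))).congr_deriv ?_
    rw [cos_two_mul, cos_sq']
    field_simp
    ring
  have hcont : ContinuousOn (fun r => sin (b * log r) ^ 2 / r) (uIcc A B) := by
    have hne : ∀ x ∈ uIcc A B, x ≠ 0 := fun x hx => (uIcc_subset_Ioi_zero hA hAB hx).ne'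
    fun_prop (disch := assumption)
  rw [intervalIntegral.integral_eq_sub_of_hasDerivAt hderiv hcont.intervalIntegrable,
    sin_two_mul_eq_zero_of_sin_eq_zero hsA, sin_two_mul_eq_zero_of_sin_eq_zero hsB]
  ring

theorem integral_energy_density (a : ℝ) (hA : 0 < A) (hAB : A ≤ B)
    (hsA : sin (b * log A) = 0) (hsB : sin (b * log B) = 0) :
    ∫ r in A..B, ((-a * sin (b * log r) + b * cos (b * log r)) ^ 2
        - (a ^ 2 + 4 * b ^ 2) * sin (b * log r) ^ 2) / r = -(3 / 2) * b ^ 2 * (log B - log A) := by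
  -- with `θ = b log r` the numerator is `-a b sin 2θ - 3 b² / 2 + (5 b² / 2) cos 2θ`
  have hderiv : ∀ r ∈ uIcc A B, HasDerivAt
      (fun x => -a * sin (b * log x) ^ 2 - 3 / 2 * b ^ 2 * log x + 5 * b / 4 * sin (2 * (b * log x)))
      (((-a * sin (b * log r) + b * cos (b * log r)) ^ 2
        - (a ^ 2 + 4 * b ^ 2) * sin (b * log r) ^ 2) / r) r := by
    intro r hr
    have hr0 : r ≠ 0 := (uIcc_subset_Ioi_zero hA hAB hr).ne'
    have hlog := hasDerivAt_log hr0
    have hsin := (hlog.const_mul b).sin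
    refine ((((hsin.pow 2).const_mul (-a)).sub (hlog.const_mul (3 / 2 * b ^ 2))).add
      (((hlog.const_mul b).const_mul 2).sin.const_mul (5 * b / 4))).congr_deriv ?_
    rw [cos_two_mul]
    field_simp
    linear_combination (32 * b ^ 2) * sin_sq_add_cos_sq (b * log r)
  have hcont : ContinuousOn (fun r => ((-a * sin (b * log r) + b * cos (b * log r)) ^ 2
      - (a ^ 2 + 4 * b ^ 2) * sin (b * log r) ^ 2) / r) (uIcc A B) := by
    have hne : ∀ x ∈ uIcc A B, x ≠ 0 := fun x hx => (uIcc_subset_Ioi_zero hA hAB hx).ne'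
    fun_prop (disch := assumption)
  rw [intervalIntegral.integral_eq_sub_of_hasDerivAt hderiv hcont.intervalIntegrable,
    sin_two_mul_eq_zero_of_sin_eq_zero hsA, sin_two_mul_eq_zero_of_sin_eq_zero hsB, hsA, hsB]
  ring

end SinLogIntegrals

/-- The test function `f_j` of the statement, with `A = r_{j+1}`, `B = r_j`. -/
noncomputable def sinLogBump (N : ℕ) (ε A B r : ℝ) : ℝ :=
  if r ∈ Icc A B then r ^ (-(((N : ℝ) - 2) / 2)) * sin (ε / 2 * log r) else 0

section SinLogBump

variable {N : ℕ} {ε A B : ℝ}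

theorem sinLogBump_eqOn_compl_Icc : EqOn (sinLogBump N ε A B) 0 (Icc A B)ᶜ := fun r hr => by
  rw [sinLogBump, if_neg hr, Pi.zero_apply]

theorem mem_Ioo_of_sinLogBump_ne_zero (hsA : sin (ε / 2 * log A) = 0)
    (hsB : sin (ε / 2 * log B) = 0) {r : ℝ} (hr : sinLogBump N ε A B r ≠ 0) : r ∈ Ioo A B := by
  rw [sinLogBump] at hr
  split_ifs at hr with hmem
  · refine ⟨hmem.1.lt_of_ne ?_, hmem.2.lt_of_ne ?_⟩ <;> rintro rfl <;> simp_all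
  · exact absurd rfl hr

theorem deriv_sinLogBump_of_mem_Ioo (hA : 0 ≤ A) {r : ℝ} (hr : r ∈ Ioo A B) :
    deriv (sinLogBump N ε A B) r = r ^ (-(((N : ℝ) - 2) / 2)) *
      (-(((N : ℝ) - 2) / 2) * sin (ε / 2 * log r) + ε / 2 * cos (ε / 2 * log r)) / r := by
  have hev : sinLogBump N ε A B =ᶠ[nhds r]
      fun x => x ^ (-(((N : ℝ) - 2) / 2)) * sin (ε / 2 * log x) :=
    Filter.eventuallyEq_of_mem (Ioo_mem_nhds hr.1 hr.2) fun x hx => by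
      rw [sinLogBump, if_pos (Ioo_subset_Icc_self hx)]
  rw [hev.deriv_eq, (hasDerivAt_rpow_neg_mul_sin_mul_log _ _ (hA.trans_lt hr.1)).deriv]

theorem integral_sinLogBump_mass (hN : 1 ≤ N) (hε : ε ≠ 0) (hA : 0 < A) (hAB : A ≤ B)
    (hsA : sin (ε / 2 * log A) = 0) (hsB : sin (ε / 2 * log B) = 0) :
    ∫ r in A..B, sinLogBump N ε A B r ^ 2 / r ^ 2 * r ^ (N - 1) = (log B - log A) / 2 := by
  rw [← integral_sin_mul_log_sq_div (div_ne_zero hε two_ne_zero) hA hAB hsA hsB]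
  refine intervalIntegral.integral_congr fun r hr => ?_
  have hr0 : 0 < r := uIcc_subset_Ioi_zero hA hAB hr
  have hw := rpow_neg_sq_mul_pow_sub_one hN hr0
  rw [uIcc_of_le hAB] at hr
  rw [sinLogBump, if_pos hr]
  generalize sin (ε / 2 * log r) = s
  generalize r ^ (-(((N : ℝ) - 2) / 2)) = w at hw ⊢
  calc (w * s) ^ 2 / r ^ 2 * r ^ (N - 1) = w ^ 2 * r ^ (N - 1) * s ^ 2 / r ^ 2 := by ring
    _ = s ^ 2 / r := by rw [hw]; field_simp

theorem integral_sinLogBump_energy (hN : 1 ≤ N) (hA : 0 < A) (hAB : A ≤ B) {c d : ℝ}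
    (hc : c ≤ A) (hd : B ≤ d) (hsA : sin (ε / 2 * log A) = 0) (hsB : sin (ε / 2 * log B) = 0) :
    ∫ r in c..d, (deriv (sinLogBump N ε A B) r ^ 2
        - (((N : ℝ) - 2) ^ 2 / 4 + ε ^ 2) / r ^ 2 * sinLogBump N ε A B r ^ 2) * r ^ (N - 1)
      = -(3 / 2) * (ε / 2) ^ 2 * (log B - log A) := by
  set a : ℝ := ((N : ℝ) - 2) / 2
  rw [← integral_energy_density a hA hAB hsA hsB]
  refine intervalIntegral_eq_of_eqOn_Ioo_of_eqOn_compl_Icc hc hAB hd (fun r hr => ?_)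
    (fun r hr => ?_)
  · have hw := rpow_neg_sq_mul_pow_sub_one hN (hA.trans hr.1)
    have hK : ((N : ℝ) - 2) ^ 2 / 4 + ε ^ 2 = a ^ 2 + 4 * (ε / 2) ^ 2 := by ring
    rw [deriv_sinLogBump_of_mem_Ioo hA.le hr, sinLogBump, if_pos (Ioo_subset_Icc_self hr), hK]
    generalize -a * sin (ε / 2 * log r) + ε / 2 * cos (ε / 2 * log r) = X
    generalize sin (ε / 2 * log r) = s
    generalize r ^ (-a) = w at hw ⊢
    generalize a ^ 2 + 4 * (ε / 2) ^ 2 = K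
    calc ((w * X / r) ^ 2 - K / r ^ 2 * (w * s) ^ 2) * r ^ (N - 1)
        = w ^ 2 * r ^ (N - 1) * (X ^ 2 - K * s ^ 2) / r ^ 2 := by ring
      _ = (X ^ 2 - K * s ^ 2) / r := by rw [hw]; field_simp
  · simp [deriv_eq_zero_of_eqOn_compl isClosed_Icc sinLogBump_eqOn_compl_Icc hr,
      sinLogBump_eqOn_compl_Icc hr]

end SinLogBump

section Nodes

variable {ε : ℝ}

theorem strictAnti_exp_neg_two_pi_mul_div (hε : 0 < ε) :
    StrictAnti fun m : ℕ => exp (-2 * π * m / ε) := fun m n hmn => by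
  have hmn : (m : ℝ) < n := Nat.cast_lt.2 hmn
  exact exp_lt_exp.2 (div_lt_div_of_pos_right (by nlinarith [pi_pos]) hε)

theorem sin_half_mul_log_exp_neg_two_pi_mul_div (hε : ε ≠ 0) (m : ℕ) :
    sin (ε / 2 * log (exp (-2 * π * m / ε))) = 0 := by
  rw [log_exp, show ε / 2 * (-2 * π * m / ε) = (-(m : ℤ) : ℤ) * π by push_cast; field_simp]
  exact sin_int_mul_pi _

end Nodes

theorem morse_index_test_functions_general (N : ℕ) (hN3 : 3 ≤ N)
    (ε₀ : ℝ) (hε₀ : 0 < ε₀)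
    (rj : ℕ → ℝ) (hrj : ∀ j : ℕ, rj j = exp (-2 * π * (j : ℝ) / ε₀))
    (f : ℕ → ℝ → ℝ)
    (hf : ∀ j : ℕ, ∀ r : ℝ, f j r =
      if r ∈ Icc (rj (j + 1)) (rj j) then
        r ^ (-(((N : ℝ) - 2) / 2)) * Real.sin (ε₀ * Real.log r / 2)
      else 0) :
    (∀ j : ℕ,
      (∫ r in (0 : ℝ)..1,
          ((deriv (f j) r) ^ 2 -
            ((((N : ℝ) - 2) ^ 2 / 4 + ε₀ ^ 2) / r ^ 2) * (f j r) ^ 2) * r ^ (N - 1)) =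
        -(3 / 4) * ε₀ ^ 2 *
          ∫ r in (rj (j + 1))..(rj j), ((f j r) ^ 2 / r ^ 2) * r ^ (N - 1) ∧
      (∫ r in (0 : ℝ)..1,
          ((deriv (f j) r) ^ 2 -
            ((((N : ℝ) - 2) ^ 2 / 4 + ε₀ ^ 2) / r ^ 2) * (f j r) ^ 2) * r ^ (N - 1)) < 0) ∧
    (∀ j k : ℕ, j ≠ k → ∀ r : ℝ, f j r = 0 ∨ f k r = 0) := by
  have hbump : ∀ j, f j = sinLogBump N ε₀ (rj (j + 1)) (rj j) := fun j => funext fun r => by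
    rw [hf, sinLogBump, mul_div_right_comm]
  have hanti : StrictAnti rj := funext hrj ▸ strictAnti_exp_neg_two_pi_mul_div hε₀
  have hpos : ∀ j, 0 < rj j := fun j => hrj j ▸ exp_pos _
  have hnode : ∀ j, sin (ε₀ / 2 * log (rj j)) = 0 := fun j =>
    hrj j ▸ sin_half_mul_log_exp_neg_two_pi_mul_div hε₀.ne' j
  refine ⟨fun j => ?_, fun j k hjk r => ?_⟩
  · have hlt : rj (j + 1) < rj j := hanti (Nat.lt_succ_self j)
    have hle_one : rj j ≤ 1 := (hanti.antitone (Nat.zero_le j)).trans_eq (by simp [hrj])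
    have hlog : 0 < log (rj j) - log (rj (j + 1)) := sub_pos.2 (log_lt_log (hpos _) hlt)
    rw [hbump, integral_sinLogBump_energy (by omega) (hpos _) hlt.le (hpos _).le hle_one
      (hnode _) (hnode _), integral_sinLogBump_mass (by omega) hε₀.ne' (hpos _) hlt.le (hnode _)
      (hnode _)]
    exact ⟨by ring, by nlinarith [mul_pos (pow_pos hε₀ 2) hlog]⟩
  · rw [hbump, hbump]
    by_contra! h
    exact disjoint_left.1 (hanti.antitone.pairwise_disjoint_on_Ioo_succ hjk)
      (mem_Ioo_of_sinLogBump_ne_zero (hnode _) (hnode _) h.1)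
      (mem_Ioo_of_sinLogBump_ne_zero (hnode _) (hnode _) h.2)

theorem morse_index_test_functions (N : ℕ) (hN3 : 3 ≤ N) (hN9 : N ≤ 9)
    (ε₀ : ℝ) (hε₀ : 0 < ε₀)
    (hsub : ((N : ℝ) - 2) ^ 2 / 4 + ε₀ ^ 2 ≤ 2 * ((N : ℝ) - 2))
    (rj : ℕ → ℝ) (hrj : ∀ j : ℕ, rj j = exp (-2 * π * (j : ℝ) / ε₀))
    (f : ℕ → ℝ → ℝ)
    (hf : ∀ j : ℕ, ∀ r : ℝ, f j r =
      if r ∈ Icc (rj (j + 1)) (rj j) then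
        r ^ (-(((N : ℝ) - 2) / 2)) * Real.sin (ε₀ * Real.log r / 2)
      else 0) :
    (∀ j : ℕ,
      (∫ r in (0 : ℝ)..1,
          ((deriv (f j) r) ^ 2 -
            ((((N : ℝ) - 2) ^ 2 / 4 + ε₀ ^ 2) / r ^ 2) * (f j r) ^ 2) * r ^ (N - 1)) =
        -(3 / 4) * ε₀ ^ 2 *
          ∫ r in (rj (j + 1))..(rj j), ((f j r) ^ 2 / r ^ 2) * r ^ (N - 1) ∧
      (∫ r in (0 : ℝ)..1,
          ((deriv (f j) r) ^ 2 -
            ((((N : ℝ) - 2) ^ 2 / 4 + ε₀ ^ 2) / r ^ 2) * (f j r) ^ 2) * r ^ (N - 1)) < 0) ∧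
    (∀ j k : ℕ, j ≠ k → ∀ r : ℝ, f j r = 0 ∨ f k r = 0) :=
  morse_index_test_functions_general N hN3 ε₀ hε₀ rj hrj f hf
end
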